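/- arXiv:2210.16880 — 2 statements merged into one kernel-verified Lean document; each statement's English description precedes it below -/
import Mathlib

section
/- Let p ∈ (0,1) and let F, G ∈ F_1^+ be cumulative distribution functions. Then Δ_{p,z}(F,G) evaluated at z = G^{-1}(p) is non-positive, i.e., ∫_p^1 (F^{-1}(u) − G^{-1}(u)) du − ∫_{G^{-1}(p)}^∞ (G(x) − F(x)) dx ≤ 0. -/
open MeasureTheory ProbabilityTheory Filter Set

/-- The cumulative distribution function of a probability measure `μ` on `ℝ`. -/
noncomputable def cdfOf (μ : Measure ℝ) : ℝ → ℝ := fun x => (μ (Iic x)).toReal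

/-- The quantile function of a cdf `F`: `F⁻¹(p) = inf {x : F x ≥ p}`. -/
noncomputable def qtl (F : ℝ → ℝ) (p : ℝ) : ℝ := sInf {x | p ≤ F x}


open scoped ENNReal NNReal

set_option linter.unusedSectionVars false

section aux

section helpers
variable (μ : Measure ℝ) [IsProbabilityMeasure μ]

lemma cdfOf_eq : cdfOf μ = cdf μ := by
  funext x; rw [cdfOf, cdf_eq_real, measureReal_def]

lemma qtl_set_nonempty {u : ℝ} (hu : u < 1) : {x | u ≤ cdfOf μ x}.Nonempty := by
  rw [cdfOf_eq]
  exact ((tendsto_cdf_atTop μ).eventually (eventually_ge_nhds hu)).exists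

lemma qtl_set_bddBelow {u : ℝ} (hu : 0 < u) : BddBelow {x | u ≤ cdfOf μ x} := by
  rw [cdfOf_eq]
  obtain ⟨x₀, hx₀⟩ := ((tendsto_cdf_atBot μ).eventually (eventually_lt_nhds hu)).exists
  refine ⟨x₀, fun y hy => ?_⟩
  by_contra h
  push_neg at h
  exact absurd (le_trans hy (monotone_cdf μ h.le)) (not_le.mpr hx₀)

lemma qtl_galois {u : ℝ} (hu : u ∈ Ioo (0:ℝ) 1) (x : ℝ) :
    qtl (cdfOf μ) u ≤ x ↔ u ≤ cdfOf μ x := by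
  constructor
  · intro h
    rw [cdfOf_eq]
    have key : ∀ y ∈ Ioi x, u ≤ cdf μ y := by
      intro y hy
      obtain ⟨s, hs, hsy⟩ := exists_lt_of_csInf_lt (qtl_set_nonempty μ hu.2) (lt_of_le_of_lt h hy)
      have := monotone_cdf μ hsy.le
      rw [cdfOf_eq] at hs
      exact le_trans hs this
    have ht : Tendsto (cdf μ) (nhdsWithin x (Ioi x)) (nhds (cdf μ x)) :=
      ((cdf μ).right_continuous x).tendsto.mono_left (nhdsWithin_mono x Ioi_subset_Ici_self)
    exact ge_of_tendsto ht (eventually_nhdsWithin_of_forall key)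
  · intro h
    exact csInf_le (qtl_set_bddBelow μ hu.1) h

lemma qtl_monotoneOn : MonotoneOn (qtl (cdfOf μ)) (Ioo (0:ℝ) 1) := by
  intro a ha b hb hab
  exact csInf_le_csInf (qtl_set_bddBelow μ ha.1) (qtl_set_nonempty μ hb.2)
    (fun x hx => le_trans hab hx)

lemma Ioi_toReal {x : ℝ} : (μ (Ioi x)).toReal = 1 - cdfOf μ x := by
  have h : μ (Ioi x) = 1 - μ (Iic x) := by
    rw [← compl_Iic, prob_compl_eq_one_sub measurableSet_Iic]
  rw [h, cdfOf, ENNReal.toReal_sub_of_le prob_le_one (by simp), ENNReal.toReal_one]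

lemma Ioi_eq_ofReal {x : ℝ} : μ (Ioi x) = ENNReal.ofReal (1 - cdfOf μ x) := by
  rw [← Ioi_toReal μ, ENNReal.ofReal_toReal (measure_ne_top μ _)]

end helpers
section layercake
variable (μ : Measure ℝ) [IsProbabilityMeasure μ]

lemma lint_translate (g : ℝ → ℝ≥0∞) (hg : Measurable g) (z : ℝ) :
    ∫⁻ x in Ioi z, g x = ∫⁻ t in Ioi 0, g (z + t) := by
  conv_lhs => rw [← (measurePreserving_add_right volume z).map_eq]
  rw [setLIntegral_map measurableSet_Ioi hg (measurable_add_const z)]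
  have hpre : (fun t => t + z) ⁻¹' Ioi z = Ioi 0 := by
    ext t; simp [lt_add_iff_pos_left]
  rw [hpre]
  exact lintegral_congr (fun t => by rw [add_comm])

lemma measurable_tail : Measurable (fun x => μ (Ioi x)) := by
  have : Antitone (fun x => μ (Ioi x)) :=
    fun a b hab => measure_mono (Ioi_subset_Ioi hab)
  exact this.measurable

lemma Lx_eq_translate (z : ℝ) :
    ∫⁻ x in Ioi z, μ (Ioi x) = ∫⁻ t in Ioi 0, μ (Ioi (z + t)) :=
  lint_translate (fun x => μ (Ioi x)) (measurable_tail μ) z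

lemma Lx_eq_moment (z : ℝ) :
    ∫⁻ x in Ioi z, μ (Ioi x) = ∫⁻ a, ENNReal.ofReal (max (a - z) 0) ∂μ := by
  rw [Lx_eq_translate μ z,
    lintegral_eq_lintegral_meas_lt (f := fun a => max (a - z) 0) μ
      (ae_of_all _ fun a => le_max_right _ _)
      (((measurable_id.sub_const z).max measurable_const).aemeasurable)]
  refine setLIntegral_congr_fun_ae measurableSet_Ioi (ae_of_all _ fun t ht => ?_)
  congr 1
  ext a
  simp only [mem_Ioi, mem_setOf_eq, lt_max_iff]
  constructor
  · intro h; left; linarith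
  · rintro (h | h)
    · linarith
    · exact absurd ht (not_lt.mpr h.le)

lemma Lx_lt_top (hμ : Integrable (fun x => max x 0) μ) (z : ℝ) :
    ∫⁻ x in Ioi z, μ (Ioi x) < ⊤ := by
  rw [Lx_eq_moment μ z]
  calc ∫⁻ a, ENNReal.ofReal (max (a - z) 0) ∂μ
      ≤ ∫⁻ a, ENNReal.ofReal (max a 0 + |z|) ∂μ := by
        refine lintegral_mono fun a => ENNReal.ofReal_le_ofReal ?_
        refine max_le ?_ (by positivity)
        have := le_max_left a (0:ℝ)
        have := neg_abs_le z
        linarith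
    _ = ∫⁻ a, (ENNReal.ofReal (max a 0) + ENNReal.ofReal |z|) ∂μ := by
        refine lintegral_congr fun a => ENNReal.ofReal_add (le_max_right _ _) (abs_nonneg z)
    _ = (∫⁻ a, ENNReal.ofReal (max a 0) ∂μ) + ENNReal.ofReal |z| := by
        rw [lintegral_add_right _ measurable_const, lintegral_const, measure_univ, mul_one]
    _ < ⊤ := by
        exact ENNReal.add_lt_top.mpr ⟨hμ.lintegral_lt_top, ENNReal.ofReal_lt_top⟩

end layercake
lemma ofReal_max_zero (a : ℝ) : ENNReal.ofReal (max a 0) = ENNReal.ofReal a := by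
  rcases le_total a 0 with h | h
  · rw [max_eq_right h, ENNReal.ofReal_zero, eq_comm, ENNReal.ofReal_eq_zero]
    exact h
  · rw [max_eq_left h]

variable (μ : Measure ℝ) [IsProbabilityMeasure μ]

lemma Lq_eq {p : ℝ} (hp : p ∈ Ioo (0:ℝ) 1) (z : ℝ) :
    ∫⁻ u in Ioo p 1, ENNReal.ofReal (qtl (cdfOf μ) u - z) =
    ∫⁻ t in Ioi 0, ENNReal.ofReal (1 - max p (cdfOf μ (z + t))) := by
  have hmono : MonotoneOn (qtl (cdfOf μ)) (Ioo p 1) :=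
    (qtl_monotoneOn μ).mono (Ioo_subset_Ioo hp.1.le le_rfl)
  have hmble : AEMeasurable (fun u => max (qtl (cdfOf μ) u - z) 0)
      (volume.restrict (Ioo p 1)) :=
    (((aemeasurable_restrict_of_monotoneOn measurableSet_Ioo hmono).sub
      aemeasurable_const).max aemeasurable_const)
  calc ∫⁻ u in Ioo p 1, ENNReal.ofReal (qtl (cdfOf μ) u - z)
      = ∫⁻ u in Ioo p 1, ENNReal.ofReal (max (qtl (cdfOf μ) u - z) 0) :=
        (lintegral_congr fun u => (ofReal_max_zero _).symm)
    _ = ∫⁻ t in Ioi 0, (volume.restrict (Ioo p 1)) {u | t < max (qtl (cdfOf μ) u - z) 0} :=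
        lintegral_eq_lintegral_meas_lt (f := fun u => max (qtl (cdfOf μ) u - z) 0) _
          (ae_of_all _ fun u => le_max_right _ _) hmble
    _ = ∫⁻ t in Ioi 0, ENNReal.ofReal (1 - max p (cdfOf μ (z + t))) := by
        refine setLIntegral_congr_fun_ae measurableSet_Ioi (ae_of_all _ fun t ht => ?_)
        rw [Measure.restrict_apply' measurableSet_Ioo]
        have hset : {u | t < max (qtl (cdfOf μ) u - z) 0} ∩ Ioo p 1
            = Ioo (max p (cdfOf μ (z + t))) 1 := by
          ext u
          simp only [mem_inter_iff, mem_setOf_eq, mem_Ioo, lt_max_iff, max_lt_iff]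
          constructor
          · rintro ⟨hlt, hu1, hu2⟩
            have hzt : z + t < qtl (cdfOf μ) u := by
              rcases hlt with h | h
              · linarith
              · exact absurd ht (not_lt.mpr h.le)
            have hgal := (qtl_galois μ (u := u) ⟨lt_trans hp.1 hu1, hu2⟩ (z + t))
            have : ¬ u ≤ cdfOf μ (z + t) := fun h => absurd (hgal.mpr h) (not_le.mpr hzt)
            exact ⟨⟨hu1, not_le.mp this⟩, hu2⟩
          · rintro ⟨⟨hu1, hu2⟩, hu3⟩
            have hgal := (qtl_galois μ (u := u) ⟨lt_trans hp.1 hu1, hu3⟩ (z + t))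
            have : ¬ qtl (cdfOf μ) u ≤ z + t := fun h => absurd (hgal.mp h) (not_le.mpr hu2)
            refine ⟨Or.inl ?_, hu1, hu3⟩
            have := not_le.mp this
            linarith
        rw [hset, Real.volume_Ioo]
lemma Lq_le_Lx {p : ℝ} (hp : p ∈ Ioo (0:ℝ) 1) (z : ℝ) :
    ∫⁻ u in Ioo p 1, ENNReal.ofReal (qtl (cdfOf μ) u - z) ≤ ∫⁻ x in Ioi z, μ (Ioi x) := by
  rw [Lq_eq μ hp z, Lx_eq_translate μ z]
  refine lintegral_mono fun t => ?_
  rw [Ioi_eq_ofReal μ]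
  refine ENNReal.ofReal_le_ofReal ?_
  have := le_max_right p (cdfOf μ (z + t))
  linarith

lemma Lq_eq_Lx {p : ℝ} (hp : p ∈ Ioo (0:ℝ) 1) :
    ∫⁻ u in Ioo p 1, ENNReal.ofReal (qtl (cdfOf μ) u - qtl (cdfOf μ) p)
      = ∫⁻ x in Ioi (qtl (cdfOf μ) p), μ (Ioi x) := by
  set z := qtl (cdfOf μ) p with hz
  rw [Lq_eq μ hp z, Lx_eq_translate μ z]
  refine setLIntegral_congr_fun_ae measurableSet_Ioi (ae_of_all _ fun t ht => ?_)
  rw [Ioi_eq_ofReal μ]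
  congr 1
  have hle : p ≤ cdfOf μ (z + t) :=
    (qtl_galois μ hp (z + t)).mp (by rw [← hz]; linarith [mem_Ioi.mp ht])
  rw [max_eq_right hle]

end aux

/-- for `p ∈ (0,1)` and cdf's `F, G ∈ F₁⁺`, the difference functional
`Δ_{p,z}(F,G)` evaluated at `z = G⁻¹(p)` is non-positive:
`∫_p^1 (F⁻¹(u) − G⁻¹(u)) du − ∫_{G⁻¹(p)}^∞ (G(x) − F(x)) dx ≤ 0`. -/
theorem stmt2 (μ ν : Measure ℝ) [IsProbabilityMeasure μ] [IsProbabilityMeasure ν]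
    (hμ : Integrable (fun x => max x 0) μ) (hν : Integrable (fun x => max x 0) ν)
    (p : ℝ) (hp : p ∈ Ioo (0 : ℝ) 1) :
    (∫ u in p..1, (qtl (cdfOf μ) u - qtl (cdfOf ν) u)) -
        (∫ x in Ioi (qtl (cdfOf ν) p), (cdfOf ν x - cdfOf μ x)) ≤ 0 := by
  set F := cdfOf μ with hF
  set G := cdfOf ν with hG
  set z := qtl G p with hz
  set Lxμ := ∫⁻ x in Ioi z, μ (Ioi x) with hLxμ
  set Lxν := ∫⁻ x in Ioi z, ν (Ioi x) with hLxν
  have finμ : Lxμ ≠ ⊤ := (Lx_lt_top μ hμ z).ne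
  have finν : Lxν ≠ ⊤ := (Lx_lt_top ν hν z).ne
  have hIoo : Ioo p 1 ⊆ Ioo (0:ℝ) 1 := Ioo_subset_Ioo hp.1.le le_rfl
  have hLqμ : ∫⁻ u in Ioo p 1, ENNReal.ofReal (qtl F u - z) ≤ Lxμ := Lq_le_Lx μ hp z
  have hLqν : ∫⁻ u in Ioo p 1, ENNReal.ofReal (qtl G u - z) = Lxν := Lq_eq_Lx ν hp
  -- basic measurability / monotonicity facts
  have aeF : AEMeasurable (fun u => qtl F u) (volume.restrict (Ioo p 1)) :=
    aemeasurable_restrict_of_monotoneOn measurableSet_Ioo ((qtl_monotoneOn μ).mono hIoo)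
  have aeG : AEMeasurable (fun u => qtl G u) (volume.restrict (Ioo p 1)) :=
    aemeasurable_restrict_of_monotoneOn measurableSet_Ioo ((qtl_monotoneOn ν).mono hIoo)
  have hGnn : ∀ u ∈ Ioo p 1, 0 ≤ qtl G u - z := by
    intro u hu
    have := qtl_monotoneOn ν hp (hIoo hu) hu.1.le
    linarith
  have hFlb : ∀ u ∈ Ioo p 1, qtl F p ≤ qtl F u := fun u hu =>
    qtl_monotoneOn μ hp (hIoo hu) hu.1.le
  -- integrability of (qtl G · - z)
  have I2 : Integrable (fun u => qtl G u - z) (volume.restrict (Ioo p 1)) := by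
    refine ⟨((aeG.sub aemeasurable_const)).aestronglyMeasurable, ?_⟩
    rw [hasFiniteIntegral_iff_ofReal ((ae_restrict_iff' measurableSet_Ioo).mpr
      (ae_of_all _ hGnn))]
    rw [hLqν]
    exact finν.lt_top
  -- integrability of max (qtl F · - z) 0
  have I1pos : Integrable (fun u => max (qtl F u - z) 0) (volume.restrict (Ioo p 1)) := by
    refine ⟨((aeF.sub aemeasurable_const).max aemeasurable_const).aestronglyMeasurable, ?_⟩
    rw [hasFiniteIntegral_iff_ofReal (f := fun u => max (qtl F u - z) 0)
      (ae_of_all _ fun u => le_max_right _ _)]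
    have : ∫⁻ u in Ioo p 1, ENNReal.ofReal (max (qtl F u - z) 0)
        = ∫⁻ u in Ioo p 1, ENNReal.ofReal (qtl F u - z) :=
      lintegral_congr fun u => ofReal_max_zero _
    rw [this]
    exact lt_of_le_of_lt hLqμ finμ.lt_top
  -- integrability of qtl F · - z
  have I1 : Integrable (fun u => qtl F u - z) (volume.restrict (Ioo p 1)) := by
    refine Integrable.mono' (I1pos.add (integrable_const (max (z - qtl F p) 0)))
      ((aeF.sub aemeasurable_const)).aestronglyMeasurable ?_
    filter_upwards [(ae_restrict_iff' measurableSet_Ioo).mpr (ae_of_all _ hFlb)] with u hu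
    simp only [Pi.add_apply]
    rw [Real.norm_eq_abs, abs_le]
    constructor
    · have h1 : (0:ℝ) ≤ max (qtl F u - z) 0 := le_max_right _ _
      have h2 : z - qtl F u ≤ max (z - qtl F p) 0 := le_trans (by linarith) (le_max_left _ _)
      linarith
    · have h1 : qtl F u - z ≤ max (qtl F u - z) 0 := le_max_left _ _
      have h2 : (0:ℝ) ≤ max (z - qtl F p) 0 := le_max_right _ _
      linarith
  -- real integral for G side
  have EqG : ∫ u in Ioo p 1, (qtl G u - z) = Lxν.toReal := by
    rw [integral_eq_lintegral_of_nonneg_ae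
      ((ae_restrict_iff' measurableSet_Ioo).mpr (ae_of_all _ hGnn))
      ((aeG.sub aemeasurable_const)).aestronglyMeasurable, hLqν]
  -- real integral bound for F side
  have LeF : ∫ u in Ioo p 1, (qtl F u - z) ≤ Lxμ.toReal := by
    calc ∫ u in Ioo p 1, (qtl F u - z) ≤ ∫ u in Ioo p 1, max (qtl F u - z) 0 :=
          integral_mono I1 I1pos (fun u => le_max_left _ _)
      _ = (∫⁻ u in Ioo p 1, ENNReal.ofReal (qtl F u - z)).toReal := by
          rw [integral_eq_lintegral_of_nonneg_ae (f := fun u => max (qtl F u - z) 0)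
            (ae_of_all _ fun u => le_max_right _ _)
            ((aeF.sub aemeasurable_const).max aemeasurable_const).aestronglyMeasurable]
          congr 1
          exact lintegral_congr fun u => ofReal_max_zero _
      _ ≤ Lxμ.toReal := ENNReal.toReal_mono finμ hLqμ
  -- tail-side integrability and values
  have Itail : ∀ (κ : Measure ℝ) [IsProbabilityMeasure κ], ∫⁻ x in Ioi z, κ (Ioi x) ≠ ⊤ →
      Integrable (fun x => (κ (Ioi x)).toReal) (volume.restrict (Ioi z)) ∧
      ∫ x in Ioi z, (κ (Ioi x)).toReal = (∫⁻ x in Ioi z, κ (Ioi x)).toReal := by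
    intro κ _ hfin
    have hmble : AEStronglyMeasurable (fun x => (κ (Ioi x)).toReal) (volume.restrict (Ioi z)) :=
      (ENNReal.measurable_toReal.comp (measurable_tail κ)).aestronglyMeasurable
    have hcongr : ∫⁻ x in Ioi z, ENNReal.ofReal ((κ (Ioi x)).toReal) = ∫⁻ x in Ioi z, κ (Ioi x) :=
      lintegral_congr fun x => ENNReal.ofReal_toReal (measure_ne_top κ _)
    constructor
    · refine ⟨hmble, ?_⟩
      rw [hasFiniteIntegral_iff_ofReal (ae_of_all _ fun x => ENNReal.toReal_nonneg)]
      rw [hcongr]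
      exact hfin.lt_top
    · rw [integral_eq_lintegral_of_nonneg_ae (ae_of_all _ fun x => ENNReal.toReal_nonneg) hmble,
        hcongr]
  obtain ⟨Iμt, Eμt⟩ := Itail μ finμ
  obtain ⟨Iνt, Eνt⟩ := Itail ν finν
  have EqTail : ∫ x in Ioi z, (G x - F x) = Lxμ.toReal - Lxν.toReal := by
    have hpt : ∀ x : ℝ, G x - F x = (μ (Ioi x)).toReal - (ν (Ioi x)).toReal := by
      intro x
      have h1 := Ioi_toReal μ (x := x)
      have h2 := Ioi_toReal ν (x := x)
      rw [← hF] at h1; rw [← hG] at h2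
      linarith
    calc ∫ x in Ioi z, (G x - F x)
        = ∫ x in Ioi z, ((μ (Ioi x)).toReal - (ν (Ioi x)).toReal) :=
          integral_congr_ae (ae_of_all _ hpt)
      _ = (∫ x in Ioi z, (μ (Ioi x)).toReal) - ∫ x in Ioi z, (ν (Ioi x)).toReal :=
          integral_sub Iμt Iνt
      _ = Lxμ.toReal - Lxν.toReal := by rw [Eμt, Eνt]
  -- interval integral to set integral
  have EqInt : ∫ u in p..1, (qtl F u - qtl G u)
      = (∫ u in Ioo p 1, (qtl F u - z)) - ∫ u in Ioo p 1, (qtl G u - z) := by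
    rw [intervalIntegral.integral_of_le hp.2.le, integral_Ioc_eq_integral_Ioo,
      ← integral_sub I1 I2]
    exact integral_congr_ae (ae_of_all _ fun u => by ring)
  rw [EqInt, EqTail]
  have : Lxν.toReal ≤ Lxν.toReal := le_rfl
  linarith [EqG, LeF]
end

section
/- Let p ∈ (0,1), let F ∈ F_1^+ be a cdf continuous at x_p := F^{-1}(p), and let F_n be the empirical cdf of arbitrary real random variables X_1, …, X_n. Then 0 ≤ Γ_p(F, F_n) ≤ (F^{-1}(p) − F_n^{-1}(p)) (F_n(x_p) − F(x_p)). -/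
open MeasureTheory ProbabilityTheory Filter Set
open scoped Topology ENNReal NNReal

/-- The "gap" functional
`Γ_p(F,G) = ∫_p^1 (F⁻¹(u) − G⁻¹(u)) du − ∫_{F⁻¹(p)}^∞ (G(x) − F(x)) dx`. -/
noncomputable def gapFun (p : ℝ) (F G : ℝ → ℝ) : ℝ :=
  (∫ u in p..1, (qtl F u - qtl G u)) - ∫ x in Ioi (qtl F p), (G x - F x)

/-- The empirical cdf of the `n` real values `x 0, …, x (n-1)`. -/
noncomputable def empCdfValues (n : ℕ) (x : Fin n → ℝ) : ℝ → ℝ :=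
  fun t => (∑ i, if x i ≤ t then (1 : ℝ) else 0) / n

/- level sets of monotone right-continuous functions are closed -/
lemma isClosed_level {H : ℝ → ℝ} (hm : Monotone H)
    (hrc : ∀ t, ContinuousWithinAt H (Ici t) t) (u : ℝ) :
    IsClosed {x | u ≤ H x} := by
  rw [← isOpen_compl_iff, isOpen_iff_mem_nhds]
  intro x hx
  have hxu : H x < u := not_le.1 hx
  have hpre : H ⁻¹' (Iio u) ∈ 𝓝[Ici x] x := (hrc x) (Iio_mem_nhds hxu)
  obtain ⟨b, hb, hsub⟩ := mem_nhdsGE_iff_exists_Ico_subset.1 hpre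
  refine mem_of_superset (Iio_mem_nhds hb) ?_
  intro y hy
  simp only [mem_compl_iff, mem_setOf_eq, not_le]
  rcases lt_or_ge y x with h | h
  · exact lt_of_le_of_lt (hm h.le) hxu
  · exact hsub ⟨h, hy⟩

lemma qtl_mem {H : ℝ → ℝ} (hm : Monotone H)
    (hrc : ∀ t, ContinuousWithinAt H (Ici t) t) {u : ℝ}
    (hne : {x | u ≤ H x}.Nonempty) (hbdd : BddBelow {x | u ≤ H x}) :
    u ≤ H (qtl H u) :=
  (isClosed_level hm hrc u).csInf_mem hne hbdd

lemma qtl_galois_s12 {H : ℝ → ℝ} (hm : Monotone H)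
    (hrc : ∀ t, ContinuousWithinAt H (Ici t) t) {u : ℝ}
    (hne : {x | u ≤ H x}.Nonempty) (hbdd : BddBelow {x | u ≤ H x}) (x : ℝ) :
    qtl H u ≤ x ↔ u ≤ H x := by
  constructor
  · intro h; exact le_trans (qtl_mem hm hrc hne hbdd) (hm h)
  · intro h; exact csInf_le hbdd h

/- indicator difference lemmas -/
lemma ind_sub_eq {a b : ℝ} (hba : b ≤ a) :
    (fun x => (if x < a then (1:ℝ) else 0) - if x < b then 1 else 0)
      = (Ico b a).indicator (fun _ => (1:ℝ)) := by
  funext x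
  rcases lt_or_ge x b with h2 | h2
  · have h1 : x < a := lt_of_lt_of_le h2 hba
    simp [Set.indicator_apply, mem_Ico, h1, h2, h2.not_ge]
  · rcases lt_or_ge x a with h1 | h1
    · simp [Set.indicator_apply, mem_Ico, h1, h2, not_lt.2 h2]
    · simp [Set.indicator_apply, mem_Ico, not_lt.2 h1, not_lt.2 (hba.trans h1), h1.not_gt]

lemma ind_sub_integrable (a b : ℝ) :
    Integrable (fun x => (if x < a then (1:ℝ) else 0) - if x < b then 1 else 0) := by
  rcases le_total b a with h | h
  · rw [ind_sub_eq h]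
    exact (integrable_indicator_iff measurableSet_Ico).2
      (integrableOn_const measure_Ico_lt_top.ne)
  · have he : (fun x => (if x < a then (1:ℝ) else 0) - if x < b then 1 else 0)
        = fun x => -((Ico a b).indicator (fun _ => (1:ℝ)) x) := by
      rw [← ind_sub_eq h]; funext x; ring
    rw [he]
    exact ((integrable_indicator_iff measurableSet_Ico).2
      (integrableOn_const measure_Ico_lt_top.ne)).neg

lemma ind_sub_integral (a b : ℝ) :
    (∫ x, ((if x < a then (1:ℝ) else 0) - if x < b then 1 else 0)) = a - b := by
  have key : ∀ c d : ℝ, d ≤ c →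
      (∫ x, ((if x < c then (1:ℝ) else 0) - if x < d then 1 else 0)) = c - d := by
    intro c d h
    rw [ind_sub_eq h, integral_indicator measurableSet_Ico, setIntegral_const,
      Real.volume_real_Ico_of_le h, smul_eq_mul, mul_one]
  rcases le_total b a with h | h
  · exact key a b h
  · have he : (fun x => (if x < a then (1:ℝ) else 0) - if x < b then 1 else 0)
        = fun x => -((if x < b then (1:ℝ) else 0) - if x < a then 1 else 0) := by
      funext x; ring
    rw [he, integral_neg, key b a h]; ring

/- the u-integral of an indicator -/
lemma u_ind_integrable (c p : ℝ) :
    Integrable (fun u => if c < u then (1:ℝ) else 0) (volume.restrict (Ioc p 1)) := by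
  have hg : IntegrableOn (fun _ : ℝ => (1:ℝ)) (Ioc p 1) :=
    integrableOn_const measure_Ioc_lt_top.ne
  refine hg.mono' ?_ ?_
  · exact ((measurable_const.ite measurableSet_Ioi measurable_const)).aestronglyMeasurable
  · refine Eventually.of_forall fun x => ?_
    by_cases h : c < x <;> simp [h]

lemma u_ind_integral {c p : ℝ} (hc : c ≤ 1) (hp : p ≤ 1) :
    (∫ u in Ioc p 1, if c < u then (1:ℝ) else 0) = 1 - max p c := by
  have he : (fun u => if c < u then (1:ℝ) else 0) = (Ioi c).indicator (fun _ => (1:ℝ)) := by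
    funext u; by_cases h : c < u <;> simp [Set.indicator_apply, h]
  rw [he, setIntegral_indicator measurableSet_Ioi]
  have hs : Ioc p 1 ∩ Ioi c = Ioc (max p c) 1 := by
    ext u; simp only [mem_inter_iff, mem_Ioc, mem_Ioi, max_lt_iff]; tauto
  rw [hs, setIntegral_const,
    Real.volume_real_Ioc_of_le (by simp [hp, hc] : max p c ≤ 1), smul_eq_mul, mul_one]

lemma cdfOf_mono (μ : Measure ℝ) [IsProbabilityMeasure μ] : Monotone (cdfOf μ) :=
  fun a b hab =>
    ENNReal.toReal_mono (measure_ne_top μ _) (measure_mono (Iic_subset_Iic.2 hab))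

lemma cdfOf_eq_cdf (μ : Measure ℝ) [IsProbabilityMeasure μ] : cdfOf μ = ⇑(cdf μ) :=
  funext fun x => (cdf_eq_real μ x).symm

lemma cdfOf_le_one (μ : Measure ℝ) [IsProbabilityMeasure μ] (x : ℝ) : cdfOf μ x ≤ 1 := by
  rw [cdfOf_eq_cdf]; exact cdf_le_one μ x

lemma cdfOf_nonneg (μ : Measure ℝ) [IsProbabilityMeasure μ] (x : ℝ) : 0 ≤ cdfOf μ x :=
  ENNReal.toReal_nonneg

lemma ofReal_one_sub_cdfOf (μ : Measure ℝ) [IsProbabilityMeasure μ] (x : ℝ) :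
    ENNReal.ofReal (1 - cdfOf μ x) = μ (Ioi x) := by
  rw [cdfOf_eq_cdf, ENNReal.ofReal_sub _ (cdf_nonneg μ x), ofReal_cdf, ENNReal.ofReal_one,
    ← compl_Iic, prob_compl_eq_one_sub measurableSet_Iic]

lemma integrableOn_one_sub_cdf (μ : Measure ℝ) [IsProbabilityMeasure μ]
    (hμ : Integrable (fun x => max x 0) μ) (d : ℝ) :
    IntegrableOn (fun x => 1 - cdfOf μ x) (Ioi d) := by
  have hFmeas : Measurable (cdfOf μ) := (cdfOf_mono μ).measurable
  constructor
  · exact (measurable_const.sub hFmeas).aestronglyMeasurable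
  · have hind : ∀ x y : ℝ, (Ioi x).indicator (fun _ => (1:ℝ≥0∞)) y
        = (Iio y).indicator (fun _ => (1:ℝ≥0∞)) x := by
      intro x y
      by_cases h : x < y <;> simp [Set.indicator_apply, h]
    have hswap : ∫⁻ x in Ioi d, ‖1 - cdfOf μ x‖ₑ ∂volume
        = ∫⁻ y, ∫⁻ x in Ioi d, (Ioi x).indicator (fun _ => (1:ℝ≥0∞)) y ∂volume ∂μ := by
      rw [← lintegral_lintegral_swap]
      · refine lintegral_congr fun x => ?_
        rw [lintegral_indicator_const measurableSet_Ioi, one_mul,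
          Real.enorm_eq_ofReal (by linarith [cdfOf_le_one μ x]),
          ofReal_one_sub_cdfOf]
      · have he : (Function.uncurry fun (x y : ℝ) => (Ioi x).indicator (fun _ => (1:ℝ≥0∞)) y)
            = {z : ℝ × ℝ | z.1 < z.2}.indicator (fun _ => (1:ℝ≥0∞)) := by
          funext z
          by_cases h : z.1 < z.2 <;> simp [Function.uncurry, Set.indicator_apply, h]
        rw [he]
        exact (Measurable.indicator measurable_const
          (measurableSet_lt measurable_fst measurable_snd)).aemeasurable
    rw [HasFiniteIntegral, hswap]
    have hle : ∫⁻ y, ∫⁻ x in Ioi d, (Ioi x).indicator (fun _ => (1:ℝ≥0∞)) y ∂volume ∂μ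
        ≤ ∫⁻ y, (ENNReal.ofReal (max y 0) + ENNReal.ofReal |d|) ∂μ := by
      refine lintegral_mono fun y => ?_
      rw [lintegral_congr fun x => hind x y, lintegral_indicator_const measurableSet_Iio,
        one_mul, Measure.restrict_apply measurableSet_Iio]
      have : Iio y ∩ Ioi d = Ioo d y := by ext z; simp [mem_Ioo, and_comm]
      rw [this, Real.volume_Ioo, ← ENNReal.ofReal_add (le_max_right y 0) (abs_nonneg d)]
      exact ENNReal.ofReal_le_ofReal (by
        rcases le_or_gt y d with h | h
        · linarith [le_max_right y 0, abs_nonneg d]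
        · linarith [le_max_left y 0, neg_abs_le d])
    refine lt_of_le_of_lt hle ?_
    rw [lintegral_add_right _ measurable_const, lintegral_const]
    refine ENNReal.add_lt_top.2 ⟨?_, ?_⟩
    · have := hμ.2
      rw [HasFiniteIntegral] at this
      refine lt_of_le_of_lt (le_of_eq (lintegral_congr fun y => ?_)) this
      rw [Real.enorm_eq_ofReal (le_max_right y 0)]
    · exact ENNReal.mul_lt_top ENNReal.ofReal_lt_top (measure_lt_top μ univ)

lemma emp_mono (n : ℕ) (xs : Fin n → ℝ) : Monotone (empCdfValues n xs) := by
  intro a b hab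
  unfold empCdfValues
  have hsum : (∑ i, if xs i ≤ a then (1:ℝ) else 0) ≤ ∑ i, if xs i ≤ b then (1:ℝ) else 0 := by
    refine Finset.sum_le_sum fun i _ => ?_
    by_cases h : xs i ≤ a
    · simp [h, h.trans hab]
    · by_cases h' : xs i ≤ b <;> simp [h, h']
  simpa [div_eq_mul_inv] using
    mul_le_mul_of_nonneg_right hsum (by positivity : (0:ℝ) ≤ ((n:ℝ))⁻¹)

lemma emp_nonneg (n : ℕ) (xs : Fin n → ℝ) (t : ℝ) : 0 ≤ empCdfValues n xs t := by
  unfold empCdfValues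
  apply div_nonneg _ (Nat.cast_nonneg n)
  exact Finset.sum_nonneg fun i _ => by split <;> norm_num

lemma emp_le_one (n : ℕ) (xs : Fin n → ℝ) (t : ℝ) : empCdfValues n xs t ≤ 1 := by
  unfold empCdfValues
  rcases Nat.eq_zero_or_pos n with h | h
  · subst h; simp
  · rw [div_le_one (by exact_mod_cast h : (0:ℝ) < n)]
    calc (∑ i, if xs i ≤ t then (1:ℝ) else 0) ≤ ∑ _i : Fin n, (1:ℝ) :=
          Finset.sum_le_sum fun i _ => by split <;> norm_num
      _ = n := by simp

lemma emp_eq_one (n : ℕ) (hn : 0 < n) (xs : Fin n → ℝ) {t : ℝ} (h : ∀ i, xs i ≤ t) :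
    empCdfValues n xs t = 1 := by
  unfold empCdfValues
  rw [Finset.sum_congr rfl (fun i _ => if_pos (h i))]
  simp only [Finset.sum_const, Finset.card_univ, Fintype.card_fin, nsmul_eq_mul, mul_one]
  exact div_self (by exact_mod_cast hn.ne')

lemma emp_eq_zero (n : ℕ) (xs : Fin n → ℝ) {t : ℝ} (h : ∀ i, t < xs i) :
    empCdfValues n xs t = 0 := by
  unfold empCdfValues
  rw [Finset.sum_congr rfl (fun i _ => if_neg (not_le.2 (h i)))]
  simp

lemma emp_rc (n : ℕ) (xs : Fin n → ℝ) (t : ℝ) :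
    ContinuousWithinAt (empCdfValues n xs) (Ici t) t := by
  obtain ⟨ε, hε, hconst⟩ : ∃ ε > 0, ∀ y ∈ Ico t (t + ε),
      empCdfValues n xs y = empCdfValues n xs t := by
    by_cases hne : ((Finset.univ.image xs).filter (fun v => t < v)).Nonempty
    · set m := ((Finset.univ.image xs).filter (fun v => t < v)).min' hne with hm
      have hmt : t < m := (Finset.mem_filter.1 (Finset.min'_mem _ hne)).2
      refine ⟨m - t, by linarith, fun y hy => ?_⟩
      obtain ⟨hy1, hy2⟩ := hy
      have hiff : ∀ i, (xs i ≤ y ↔ xs i ≤ t) := by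
        intro i
        by_cases h : xs i ≤ t
        · exact iff_of_true (h.trans hy1) h
        · have h' : t < xs i := not_le.1 h
          have hmle : m ≤ xs i := Finset.min'_le _ _ (Finset.mem_filter.2
            ⟨Finset.mem_image.2 ⟨i, Finset.mem_univ i, rfl⟩, h'⟩)
          exact iff_of_false (by intro hc; linarith) h
      unfold empCdfValues
      congr 1
      exact Finset.sum_congr rfl fun i _ => if_congr (hiff i) rfl rfl
    · refine ⟨1, one_pos, fun y hy => ?_⟩
      have hall : ∀ i, xs i ≤ t := by
        intro i
        by_contra hc
        exact hne ⟨xs i, Finset.mem_filter.2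
          ⟨Finset.mem_image.2 ⟨i, Finset.mem_univ i, rfl⟩, not_le.1 hc⟩⟩
      unfold empCdfValues
      congr 1
      exact Finset.sum_congr rfl fun i _ =>
        if_congr (iff_of_true ((hall i).trans hy.1) (hall i)) rfl rfl
  have hmem : Ico t (t + ε) ∈ 𝓝[Ici t] t := Ico_mem_nhdsGE_of_mem ⟨le_refl t, by linarith⟩
  exact Filter.Tendsto.congr'
    (Filter.eventuallyEq_of_mem hmem fun y hy => (hconst y hy).symm) tendsto_const_nhds

lemma fc_norm_le (a b u : ℝ) :
    ‖(if a < u then (1:ℝ) else 0) - (if b < u then 1 else 0)‖ ≤ 1 := by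
  by_cases h1 : a < u <;> by_cases h2 : b < u <;> simp [h1, h2]

/-- for `p ∈ (0,1)`, a cdf `F ∈ F₁⁺` continuous at `x_p := F⁻¹(p)`,
and the empirical cdf `F_n` of arbitrary real random variables `X_1, …, X_n`
(surely, i.e. at every sample point `ω`):
`0 ≤ Γ_p(F, F_n) ≤ (F⁻¹(p) − F_n⁻¹(p)) (F_n(x_p) − F(x_p))`. -/
theorem stmt12 {Ω : Type*} [MeasurableSpace Ω] (P : Measure Ω) [IsProbabilityMeasure P]
    (μ : Measure ℝ) [IsProbabilityMeasure μ]
    (hμ : Integrable (fun x => max x 0) μ)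
    (p : ℝ) (hp : p ∈ Ioo (0 : ℝ) 1)
    (hcont : ContinuousAt (cdfOf μ) (qtl (cdfOf μ) p))
    (n : ℕ) (hn : 0 < n) (X : Fin n → Ω → ℝ) (hX : ∀ i, Measurable (X i)) (ω : Ω) :
    0 ≤ gapFun p (cdfOf μ) (empCdfValues n (fun i => X i ω)) ∧
      gapFun p (cdfOf μ) (empCdfValues n (fun i => X i ω)) ≤
        (qtl (cdfOf μ) p - qtl (empCdfValues n (fun i => X i ω)) p) *
          (empCdfValues n (fun i => X i ω) (qtl (cdfOf μ) p) -
            cdfOf μ (qtl (cdfOf μ) p)) := by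
  classical
  obtain ⟨hp0, hp1⟩ := hp
  set xs : Fin n → ℝ := fun i => X i ω with hxs
  set F : ℝ → ℝ := cdfOf μ with hFdef
  set G : ℝ → ℝ := empCdfValues n xs with hGdef
  -- basic properties
  have hFmono : Monotone F := cdfOf_mono μ
  have hFrc : ∀ t, ContinuousWithinAt F (Ici t) t := by
    intro t
    have : F = ⇑(cdf μ) := cdfOf_eq_cdf μ
    rw [this]
    exact (cdf μ).right_continuous t
  have hF0 : ∀ x, 0 ≤ F x := cdfOf_nonneg μ
  have hF1 : ∀ x, F x ≤ 1 := cdfOf_le_one μ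
  have hGmono : Monotone G := emp_mono n xs
  have hGrc := emp_rc n xs
  have hG0 := emp_nonneg n xs
  have hG1 := emp_le_one n xs
  have hFmeas : Measurable F := hFmono.measurable
  have hGmeas : Measurable G := hGmono.measurable
  -- sample bounds
  have hFinNe : (Finset.univ : Finset (Fin n)).Nonempty := by
    have : Nonempty (Fin n) := Fin.pos_iff_nonempty.1 hn
    exact Finset.univ_nonempty
  set M : ℝ := Finset.univ.sup' hFinNe xs with hM
  set mm : ℝ := Finset.univ.inf' hFinNe xs with hmm
  have hGM : ∀ x, M ≤ x → G x = 1 := fun x hx =>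
    emp_eq_one n hn xs (fun i => le_trans (Finset.le_sup' xs (Finset.mem_univ i)) hx)
  have hGm : ∀ x, x < mm → G x = 0 := fun x hx =>
    emp_eq_zero n xs (fun i => lt_of_lt_of_le hx (Finset.inf'_le xs (Finset.mem_univ i)))
  -- Galois connections
  have hFtop : Tendsto F atTop (𝓝 1) := by
    have : F = ⇑(cdf μ) := cdfOf_eq_cdf μ
    rw [this]; exact tendsto_cdf_atTop μ
  have hFbot : Tendsto F atBot (𝓝 0) := by
    have : F = ⇑(cdf μ) := cdfOf_eq_cdf μ
    rw [this]; exact tendsto_cdf_atBot μ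
  have hGalF : ∀ u : ℝ, 0 < u → u < 1 → ∀ x, (qtl F u ≤ x ↔ u ≤ F x) := by
    intro u hu0 hu1
    have hne : {x | u ≤ F x}.Nonempty := (hFtop.eventually (eventually_ge_nhds hu1)).exists
    have hbdd : BddBelow {x | u ≤ F x} := by
      obtain ⟨x₀, hx₀⟩ := (hFbot.eventually (eventually_lt_nhds hu0)).exists
      refine ⟨x₀, fun y hy => ?_⟩
      by_contra hc
      push_neg at hc
      exact absurd (le_trans hy (hFmono hc.le)) (not_le.2 hx₀)
    exact qtl_galois_s12 hFmono hFrc hne hbdd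
  have hGalG : ∀ u : ℝ, 0 < u → u ≤ 1 → ∀ x, (qtl G u ≤ x ↔ u ≤ G x) := by
    intro u hu0 hu1
    have hne : {x | u ≤ G x}.Nonempty := ⟨M, by simp only [mem_setOf_eq, hGM M le_rfl]; exact hu1⟩
    have hbdd : BddBelow {x | u ≤ G x} := by
      refine ⟨mm - 1, fun y hy => ?_⟩
      by_contra hc
      push_neg at hc
      have hy' : u ≤ G y := hy
      rw [hGm y (by linarith)] at hy'
      exact absurd hy' (not_le.2 hu0)
    exact qtl_galois_s12 hGmono hGrc hne hbdd
  set xp : ℝ := qtl F p with hxp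
  set yp : ℝ := qtl G p with hyp
  have hFxp_ge : p ≤ F xp := (hGalF p hp0 hp1 xp).1 le_rfl
  have hFlt : ∀ x, x < xp → F x < p := by
    intro x hx
    by_contra hc
    exact absurd ((hGalF p hp0 hp1 x).2 (not_lt.1 hc)) (not_le.2 hx)
  have hFxp : F xp = p := by
    refine le_antisymm ?_ hFxp_ge
    by_contra hc
    push_neg at hc
    have hev : ∀ᶠ y in 𝓝 xp, p < F y := hcont.eventually (eventually_gt_nhds hc)
    have hev2 : ∀ᶠ y in 𝓝[<] xp, p < F y ∧ y ∈ Iio xp :=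
      (hev.filter_mono nhdsWithin_le_nhds).and eventually_mem_nhdsWithin
    obtain ⟨y, hy1, hy2⟩ := hev2.exists
    exact absurd hy2 (not_lt.2 ((hGalF p hp0 hp1 y).2 hy1.le))
  have hFle : ∀ x, x ≤ xp → F x ≤ p := by
    intro x hx
    rcases eq_or_lt_of_le hx with h | h
    · rw [h, hFxp]
    · exact (hFlt x h).le
  -- the Fubini step
  set fc : ℝ → ℝ → ℝ :=
    fun x u => (if F x < u then (1:ℝ) else 0) - (if G x < u then 1 else 0) with hfc
  have hfmeas : Measurable (Function.uncurry fc) := by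
    have h1 : Measurable (fun z : ℝ × ℝ => if F z.1 < z.2 then (1:ℝ) else 0) :=
      Measurable.ite (measurableSet_lt (hFmeas.comp measurable_fst) measurable_snd)
        measurable_const measurable_const
    have h2 : Measurable (fun z : ℝ × ℝ => if G z.1 < z.2 then (1:ℝ) else 0) :=
      Measurable.ite (measurableSet_lt (hGmeas.comp measurable_fst) measurable_snd)
        measurable_const measurable_const
    exact h1.sub h2
  set c0 : ℝ := min xp mm with hc0
  set d0 : ℝ := max xp M with hd0
  have hc0d0 : c0 ≤ d0 := le_trans (min_le_left _ _) (le_max_left _ _)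
  have htail : IntegrableOn (fun x => 1 - F x) (Ioi d0) := integrableOn_one_sub_cdf μ hμ d0
  set bfun : ℝ → ℝ := fun x => (Icc c0 d0).indicator (fun _ => (1:ℝ)) x
      + (Ioi d0).indicator (fun y => 1 - F y) x with hbfun
  have hb_int : Integrable bfun := by
    refine Integrable.add ?_ ?_
    · exact (integrable_indicator_iff measurableSet_Icc).2
        (integrableOn_const measure_Icc_lt_top.ne)
    · exact (integrable_indicator_iff measurableSet_Ioi).2 htail
  have hslice : ∀ x : ℝ, Integrable (fun u => fc x u) (volume.restrict (Ioc p 1)) :=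
    fun x => (u_ind_integrable (F x) p).sub (u_ind_integrable (G x) p)
  have hnorm_int : Integrable
      (fun x => ∫ u, ‖fc x u‖ ∂(volume.restrict (Ioc p 1))) volume := by
    refine Integrable.mono' hb_int ?_ ?_
    · exact (hfmeas.norm.aestronglyMeasurable.integral_prod_right')
    · refine Eventually.of_forall fun x => ?_
      have hnn : 0 ≤ ∫ u, ‖fc x u‖ ∂(volume.restrict (Ioc p 1)) :=
        integral_nonneg fun u => norm_nonneg _
      rw [Real.norm_of_nonneg hnn]
      rcases lt_or_ge x c0 with hx | hx
      · have h0 : ∫ u, ‖fc x u‖ ∂(volume.restrict (Ioc p 1)) = 0 := by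
          have heq : EqOn (fun u => ‖fc x u‖) (fun _ => (0:ℝ)) (Ioc p 1) := by
            intro u hu
            have hFx : F x < u :=
              lt_of_lt_of_le (hFlt x (lt_of_lt_of_le hx (min_le_left _ _))) hu.1.le
            have hGx : G x < u := by
              rw [hGm x (lt_of_lt_of_le hx (min_le_right _ _))]
              exact lt_trans hp0 hu.1
            simp [hfc, hFx, hGx]
          rw [setIntegral_congr_fun measurableSet_Ioc heq]
          simp
        rw [h0, hbfun]
        have h1 : x ∉ Icc c0 d0 := fun h => absurd h.1 (not_le.2 hx)
        have h2 : x ∉ Ioi d0 := by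
          simp only [mem_Ioi, not_lt]
          linarith
        simp [Set.indicator_of_notMem, h1, h2]
      · rcases le_or_gt x d0 with hx2 | hx2
        · have hle1 : ∫ u, ‖fc x u‖ ∂(volume.restrict (Ioc p 1))
              ≤ ∫ _u, (1:ℝ) ∂(volume.restrict (Ioc p 1)) := by
            refine integral_mono_of_nonneg (Eventually.of_forall fun u => norm_nonneg _)
              (integrableOn_const measure_Ioc_lt_top.ne)
              (Eventually.of_forall fun u => ?_)
            exact fc_norm_le (F x) (G x) u
          have hval : ∫ _u, (1:ℝ) ∂(volume.restrict (Ioc p 1)) = 1 - p := by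
            rw [setIntegral_const,
              Real.volume_real_Ioc_of_le hp1.le, smul_eq_mul, mul_one]
          have hbx : bfun x = 1 := by
            rw [hbfun]
            have h1 : x ∈ Icc c0 d0 := ⟨hx, hx2⟩
            have h2 : x ∉ Ioi d0 := by simp only [mem_Ioi, not_lt]; exact hx2
            simp [Set.indicator_of_mem, Set.indicator_of_notMem, h1, h2]
          rw [hbx]
          linarith [hle1, hval.le]
        · have hGx : G x = 1 := hGM x (le_of_lt (lt_of_le_of_lt (le_max_right _ _) hx2))
          have heq : EqOn (fun u => ‖fc x u‖)
              (fun u => if F x < u then (1:ℝ) else 0) (Ioc p 1) := by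
            intro u hu
            have hng : ¬ G x < u := by rw [hGx]; exact not_lt.2 hu.2
            by_cases hf : F x < u <;> simp [hfc, hf, hng]
          have h3 : ∫ u, ‖fc x u‖ ∂(volume.restrict (Ioc p 1)) = 1 - max p (F x) := by
            rw [setIntegral_congr_fun measurableSet_Ioc heq, u_ind_integral (hF1 x) hp1.le]
          rw [h3]
          simp only [hbfun]
          have h1 : x ∉ Icc c0 d0 := fun h => absurd h.2 (not_le.2 hx2)
          have h2 : x ∈ Ioi d0 := hx2
          rw [Set.indicator_of_notMem h1, Set.indicator_of_mem h2]
          simp only [zero_add]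
          have : F x ≤ max p (F x) := le_max_right _ _
          linarith
  have hint_prod : Integrable (Function.uncurry fc)
      (volume.prod (volume.restrict (Ioc p 1))) := by
    rw [integrable_prod_iff hfmeas.aestronglyMeasurable]
    exact ⟨Eventually.of_forall hslice, hnorm_int⟩
  set φ : ℝ → ℝ := fun x => max p (G x) - max p (F x) with hφ
  have hinner : ∀ x, ∫ u, fc x u ∂(volume.restrict (Ioc p 1)) = φ x := by
    intro x
    have : ∫ u, fc x u ∂(volume.restrict (Ioc p 1))
        = (∫ u in Ioc p 1, if F x < u then (1:ℝ) else 0)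
          - ∫ u in Ioc p 1, if G x < u then (1:ℝ) else 0 :=
      integral_sub (u_ind_integrable (F x) p) (u_ind_integrable (G x) p)
    rw [this, u_ind_integral (hF1 x) hp1.le, u_ind_integral (hG1 x) hp1.le, hφ]
    ring
  have hφint : Integrable φ volume :=
    (hint_prod.integral_prod_left).congr (Eventually.of_forall hinner)
  have hae1 : ∀ᵐ u ∂(volume.restrict (Ioc p (1:ℝ))), u ∈ Ioo p 1 := by
    have h1 : ∀ᵐ u ∂(volume.restrict (Ioc p (1:ℝ))), u ∈ Ioc p 1 :=
      ae_restrict_mem measurableSet_Ioc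
    have h2 : ∀ᵐ u ∂(volume.restrict (Ioc p (1:ℝ))), u ≠ 1 := by
      rw [ae_iff]
      have hsub : {u : ℝ | ¬ u ≠ 1} = {1} := by ext u; simp
      rw [hsub, Measure.restrict_apply (measurableSet_singleton 1)]
      exact le_antisymm (le_trans (measure_mono inter_subset_left)
        (le_of_eq Real.volume_singleton)) zero_le
    filter_upwards [h1, h2] with u hu hu2
    exact ⟨hu.1, lt_of_le_of_ne hu.2 hu2⟩
  have hA : (∫ u in p..1, (qtl F u - qtl G u)) = ∫ x, φ x := by
    rw [intervalIntegral.integral_of_le hp1.le]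
    have hswap := integral_integral_swap hint_prod
    have hL : ∫ x, ∫ u, fc x u ∂(volume.restrict (Ioc p 1)) = ∫ x, φ x :=
      integral_congr_ae (Eventually.of_forall hinner)
    have hR : ∫ u in Ioc p 1, (qtl F u - qtl G u)
        = ∫ u in Ioc p 1, (∫ x, fc x u) := by
      refine integral_congr_ae ?_
      filter_upwards [hae1] with u hu
      have hxF : ∀ x : ℝ, (x < qtl F u ↔ F x < u) := by
        intro x
        rw [← not_le, ← not_le]
        exact not_congr (hGalF u (lt_trans hp0 hu.1) hu.2 x)
      have hxG : ∀ x : ℝ, (x < qtl G u ↔ G x < u) := by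
        intro x
        rw [← not_le, ← not_le]
        exact not_congr (hGalG u (lt_trans hp0 hu.1) hu.2.le x)
      have : ∫ x, fc x u
          = ∫ x, ((if x < qtl F u then (1:ℝ) else 0) - if x < qtl G u then 1 else 0) := by
        refine integral_congr_ae (Eventually.of_forall fun x => ?_)
        simp only [hfc]
        rw [if_congr (hxF x).symm rfl rfl, if_congr (hxG x).symm rfl rfl]
      rw [this, ind_sub_integral]
    rw [hR, ← hL]
    exact hswap.symm
  -- decomposition of the gap
  set ψ : ℝ → ℝ := fun x => max p (G x) - G x with hψ
  have hψmeas : Measurable ψ := (measurable_const.max hGmeas).sub hGmeas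
  have hψnn : ∀ x, 0 ≤ ψ x := fun x => sub_nonneg.2 (le_max_right _ _)
  have hψIoi : IntegrableOn ψ (Ioi xp) := by
    have hbd : Integrable ((Icc c0 d0).indicator (fun _ => (1:ℝ)))
        (volume.restrict (Ioi xp)) :=
      ((integrable_indicator_iff measurableSet_Icc).2
        (integrableOn_const measure_Icc_lt_top.ne)).restrict
    refine hbd.mono' hψmeas.aestronglyMeasurable.restrict ?_
    rw [ae_restrict_iff' measurableSet_Ioi]
    refine Eventually.of_forall fun x hx => ?_
    rw [Real.norm_of_nonneg (hψnn x)]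
    rcases le_or_gt x d0 with h | h
    · have hmem : x ∈ Icc c0 d0 := ⟨le_trans (min_le_left _ _) hx.le, h⟩
      rw [Set.indicator_of_mem hmem]
      have := hG0 x
      have := hG1 x
      have : max p (G x) ≤ 1 := max_le hp1.le (hG1 x)
      simp only [hψ]
      linarith [hG0 x]
    · have hGx : G x = 1 := hGM x (le_of_lt (lt_of_le_of_lt (le_max_right _ _) h))
      have : ψ x = 0 := by simp only [hψ]; rw [hGx, max_eq_right hp1.le, sub_self]
      rw [this]
      exact Set.indicator_nonneg (fun _ _ => zero_le_one) x
  have hφIic : IntegrableOn φ (Iic xp) := hφint.integrableOn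
  have hφIoi : IntegrableOn φ (Ioi xp) := hφint.integrableOn
  have hφIoi_congr : EqOn φ (fun x => max p (G x) - F x) (Ioi xp) := by
    intro x hx
    simp only [hφ]
    rw [max_eq_right (le_trans hFxp_ge (hFmono hx.le))]
  have hmaxF_int : IntegrableOn (fun x => max p (G x) - F x) (Ioi xp) :=
    hφIoi.congr_fun hφIoi_congr measurableSet_Ioi
  have hGFIoi : IntegrableOn (fun x => G x - F x) (Ioi xp) := by
    have heq : EqOn (fun x => G x - F x)
        (fun x => (max p (G x) - F x) - ψ x) (Ioi xp) := by
      intro x _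
      simp only [hψ]
      ring
    exact IntegrableOn.congr_fun (hmaxF_int.sub hψIoi)
      (fun x hx => (heq hx).symm) measurableSet_Ioi
  have hsplit : ∫ x, φ x = (∫ x in Iic xp, φ x) + ∫ x in Ioi xp, φ x := by
    rw [← integral_add_compl measurableSet_Iic hφint, compl_Iic]
  have hIoi_eq : (∫ x in Ioi xp, φ x) - ∫ x in Ioi xp, (G x - F x) = ∫ x in Ioi xp, ψ x := by
    have hsub : ∫ x in Ioi xp, (φ x - (G x - F x))
        = (∫ x in Ioi xp, φ x) - ∫ x in Ioi xp, (G x - F x) := integral_sub hφIoi hGFIoi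
    rw [← hsub]
    refine setIntegral_congr_fun measurableSet_Ioi fun x hx => ?_
    have h1 : max p (F x) = F x := max_eq_right (le_trans hFxp_ge (hFmono hx.le))
    show φ x - (G x - F x) = ψ x
    simp only [hφ, hψ, h1]
    ring
  have hgap : gapFun p F G = (∫ x in Iic xp, φ x) + ∫ x in Ioi xp, ψ x := by
    have h0 : gapFun p F G
        = (∫ u in p..1, (qtl F u - qtl G u)) - ∫ x in Ioi (qtl F p), (G x - F x) := rfl
    rw [h0, hA, ← hxp, hsplit, ← hIoi_eq]
    ring
  have hIic_congr : EqOn φ (fun x => max p (G x) - p) (Iic xp) := by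
    intro x hx
    simp only [hφ]
    rw [max_eq_left (hFle x hx)]
  have hIic_eq : ∫ x in Iic xp, φ x = ∫ x in Iic xp, (max p (G x) - p) :=
    setIntegral_congr_fun measurableSet_Iic hIic_congr
  have hIic_int : IntegrableOn (fun x => max p (G x) - p) (Iic xp) :=
    hφIic.congr_fun hIic_congr measurableSet_Iic
  constructor
  · rw [hgap]
    have h1 : 0 ≤ ∫ x in Iic xp, φ x := by
      rw [hIic_eq]
      exact setIntegral_nonneg measurableSet_Iic fun x _ => sub_nonneg.2 (le_max_left _ _)
    have h2 : 0 ≤ ∫ x in Ioi xp, ψ x :=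
      setIntegral_nonneg measurableSet_Ioi fun x _ => hψnn x
    linarith
  · rw [hgap, hFxp]
    rcases le_or_gt yp xp with hcase | hcase
    · -- yp ≤ xp
      have hq : p ≤ G xp := (hGalG p hp0 hp1.le xp).1 hcase
      have hI2 : ∫ x in Ioi xp, ψ x = 0 := by
        have heq : EqOn ψ (fun _ => (0:ℝ)) (Ioi xp) := by
          intro x hx
          have : p ≤ G x := (hGalG p hp0 hp1.le x).1 (le_trans hcase hx.le)
          simp only [hψ]
          rw [max_eq_right this, sub_self]
        rw [setIntegral_congr_fun measurableSet_Ioi heq]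
        simp
      have hbound : ∀ x ∈ Iic xp, max p (G x) - p
          ≤ (Icc yp xp).indicator (fun _ => G xp - p) x := by
        intro x hx
        rcases lt_or_ge x yp with h | h
        · have hGxlt : ¬ p ≤ G x := fun hc =>
            absurd ((hGalG p hp0 hp1.le x).2 hc) (not_le.2 h)
          have : max p (G x) = p := max_eq_left (le_of_not_ge fun hc => hGxlt (hc))
          rw [this, sub_self]
          exact Set.indicator_nonneg (fun _ _ => sub_nonneg.2 hq) x
        · have hmem : x ∈ Icc yp xp := ⟨h, hx⟩
          rw [Set.indicator_of_mem hmem]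
          have h1 : G x ≤ G xp := hGmono hx
          have h2 : max p (G x) ≤ G xp := max_le hq h1
          linarith
      have hind_int : IntegrableOn ((Icc yp xp).indicator (fun _ => G xp - p)) (Iic xp) :=
        ((integrable_indicator_iff measurableSet_Icc).2
          (integrableOn_const measure_Icc_lt_top.ne)).integrableOn
      have hI1 : ∫ x in Iic xp, (max p (G x) - p)
          ≤ (xp - yp) * (G xp - p) := by
        refine le_trans (setIntegral_mono_on hIic_int hind_int measurableSet_Iic hbound) ?_
        rw [setIntegral_indicator measurableSet_Icc]
        have hss : Iic xp ∩ Icc yp xp = Icc yp xp :=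
          inter_eq_self_of_subset_right (fun z hz => hz.2)
        rw [hss, setIntegral_const,
          Real.volume_real_Icc_of_le hcase, smul_eq_mul]
      rw [hI2, hIic_eq, add_zero]
      exact hI1
    · -- xp < yp
      have hq : G xp < p := by
        by_contra hc
        exact absurd ((hGalG p hp0 hp1.le xp).2 (not_lt.1 hc)) (not_le.2 hcase)
      have hI1 : ∫ x in Iic xp, φ x = 0 := by
        rw [hIic_eq]
        have heq : EqOn (fun x => max p (G x) - p) (fun _ => (0:ℝ)) (Iic xp) := by
          intro x hx
          have hxyp : x < yp := lt_of_le_of_lt hx hcase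
          have hGxlt : ¬ p ≤ G x := fun hc =>
            absurd ((hGalG p hp0 hp1.le x).2 hc) (not_le.2 hxyp)
          show max p (G x) - p = (0:ℝ)
          rw [max_eq_left (le_of_not_ge fun hc => hGxlt hc), sub_self]
        rw [setIntegral_congr_fun measurableSet_Iic heq]
        simp
      have hbound : ∀ x ∈ Ioi xp, ψ x
          ≤ (Ioc xp yp).indicator (fun _ => p - G xp) x := by
        intro x hx
        rcases le_or_gt yp x with h | h
        · have hpg : p ≤ G x := (hGalG p hp0 hp1.le x).1 h
          have : ψ x = 0 := by simp only [hψ]; rw [max_eq_right hpg, sub_self]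
          rw [this]
          exact Set.indicator_nonneg (fun _ _ => sub_nonneg.2 hq.le) x
        · have hmem : x ∈ Ioc xp yp := ⟨hx, h.le⟩
          rw [Set.indicator_of_mem hmem]
          have h1 : G xp ≤ G x := hGmono hx.le
          simp only [hψ]
          have : max p (G x) ≤ p := max_le le_rfl (by
            by_contra hc
            push_neg at hc
            exact absurd ((hGalG p hp0 hp1.le x).2 hc.le) (not_le.2 h))
          linarith
      have hind_int : IntegrableOn ((Ioc xp yp).indicator (fun _ => p - G xp)) (Ioi xp) :=
        ((integrable_indicator_iff measurableSet_Ioc).2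
          (integrableOn_const measure_Ioc_lt_top.ne)).integrableOn
      have hI2 : ∫ x in Ioi xp, ψ x ≤ (yp - xp) * (p - G xp) := by
        refine le_trans (setIntegral_mono_on hψIoi hind_int measurableSet_Ioi hbound) ?_
        rw [setIntegral_indicator measurableSet_Ioc]
        have hss : Ioi xp ∩ Ioc xp yp = Ioc xp yp :=
          inter_eq_self_of_subset_right (fun z hz => hz.1)
        rw [hss, setIntegral_const,
          Real.volume_real_Ioc_of_le hcase.le, smul_eq_mul]
      rw [hI1, zero_add]
      calc ∫ x in Ioi xp, ψ x ≤ (yp - xp) * (p - G xp) := hI2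
        _ = (xp - yp) * (G xp - p) := by ring
end
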